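/- Let n ≥ 2 and let v_j', v_k', α, b_j, b_k, m be natural numbers with v_j' ≤ (v_k')^n, b_j ≤ m, b_k ≥ 1, and v_k' ≥ m. Then v_j' + α*b_j ≤ (v_k' + α*b_k)^n. -/
import Mathlib

lemma aux_pow (x y : ℕ) : ∀ n : ℕ, x ^ n + n * x ^ (n - 1) * y ≤ (x + y) ^ n := by
  intro n
  induction n with
  | zero => simp
  | succ n ih =>
    rcases Nat.eq_zero_or_pos n with rfl | hn
    · simp [pow_succ]
    have hx : x ^ (n-1) * x = x ^ n := by
      rw [← pow_succ, Nat.sub_add_cancel hn]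
    have hx2 : n * x ^ (n-1) * y * x = n * x ^ n * y := by
      rw [mul_right_comm, mul_assoc n, hx]
    calc x ^ (n+1) + (n+1) * x ^ n * y
        = x ^ n * x + (x ^ n * y + n * x ^ (n-1) * y * x) := by
          rw [hx2, ← pow_succ]; ring
      _ ≤ x ^ n * x + (x ^ n * y + n * x ^ (n-1) * y * x) + n * x ^ (n-1) * y * y :=
          Nat.le_add_right _ _
      _ = (x ^ n + n * x ^ (n-1) * y) * (x + y) := by ring
      _ ≤ (x + y) ^ n * (x + y) := Nat.mul_le_mul_right _ ih
      _ = (x + y) ^ (n+1) := (pow_succ _ _).symm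

theorem stmt_5 (n vj' vk' α bj bk m : ℕ) (hn : n ≥ 2)
    (h : vj' ≤ vk' ^ n) (hbj : bj ≤ m) (hbk : bk ≥ 1) (hvk : vk' ≥ m) :
    vj' + α * bj ≤ (vk' + α * bk) ^ n := by
  have h1 : vj' + α * bj ≤ vk' ^ n + α * vk' := by
    have : bj ≤ vk' := hbj.trans hvk
    gcongr
  have h2 : vk' ≤ vk' ^ (n - 1) := Nat.le_self_pow (by omega) vk'
  have h4 : vk' ^ (n-1) ≤ n * vk' ^ (n-1) := Nat.le_mul_of_pos_left _ (by omega)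
  have h3 : α * vk' ≤ n * vk' ^ (n-1) * α := by
    calc α * vk' ≤ α * vk' ^ (n-1) := by gcongr
      _ = vk' ^ (n-1) * α := mul_comm _ _
      _ ≤ n * vk' ^ (n-1) * α := Nat.mul_le_mul_right _ h4
  calc vj' + α * bj ≤ vk' ^ n + α * vk' := h1
    _ ≤ vk' ^ n + n * vk' ^ (n-1) * α := by omega
    _ ≤ vk' ^ n + n * vk' ^ (n-1) * (α * bk) := by
        gcongr
        exact Nat.le_mul_of_pos_right α hbk
    _ ≤ (vk' + α * bk) ^ n := by
        have := aux_pow vk' (α * bk) n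
        omega
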